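/- arXiv:1901.03076 — 2 statements merged into one kernel-verified Lean document; each statement's English description precedes it below -/
import Mathlib

section
/- Let v : I → S² ⊂ ℝ³ be a differentiable curve on an interval I, and let u = g ∘ v where g(y₁,y₂,y₃) = ((√2/2)y₁², (√2/2)y₂², (√2/2)y₃², y₁y₂, y₂y₃, y₃y₁). Then ‖u'(t)‖ = ‖v'(t)‖ for every t ∈ I; i.e., g is an isometric immersion along curves on the sphere. -/
noncomputable abbrev E3 := EuclideanSpace ℝ (Fin 3)
noncomputable abbrev E6 := EuclideanSpace ℝ (Fin 6)

/-- The quadratic (Veronese-type) map `g : ℝ³ → ℝ⁶`. -/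
noncomputable def gmap (y : E3) : E6 :=
  WithLp.toLp 2 ![Real.sqrt 2 / 2 * (y 0) ^ 2, Real.sqrt 2 / 2 * (y 1) ^ 2, Real.sqrt 2 / 2 * (y 2) ^ 2,
    y 0 * y 1, y 1 * y 2, y 2 * y 0]

/-!
Along a curve `v`, the derivative of the quadratic map `g ∘ v` is `dg_{v}(v')`, and expanding
the six components gives `‖dg_y w‖² = ‖y‖² ‖w‖² + ⟪y, w⟫²`. On the sphere `‖v‖ = 1`, and
differentiating the constant `‖v‖²` gives `⟪v, v'⟫ = 0`, so `‖u'‖ = ‖v'‖`. Derivatives within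
`[a, b]` are unique because `a < b`.
-/

open scoped RealInnerProductSpace

noncomputable def gmapDeriv (y w : E3) : E6 :=
  WithLp.toLp 2 ![Real.sqrt 2 * y 0 * w 0, Real.sqrt 2 * y 1 * w 1, Real.sqrt 2 * y 2 * w 2,
    w 0 * y 1 + y 0 * w 1, w 1 * y 2 + y 1 * w 2, w 2 * y 0 + y 2 * w 0]

theorem norm_gmapDeriv_sq (y w : E3) :
    ‖gmapDeriv y w‖ ^ 2 = ‖y‖ ^ 2 * ‖w‖ ^ 2 + ⟪y, w⟫ ^ 2 := by
  simp only [EuclideanSpace.norm_sq_eq, EuclideanSpace.inner_eq_star_dotProduct, gmapDeriv,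
    Fin.sum_univ_six, Fin.sum_univ_three, Real.norm_eq_abs, sq_abs, dotProduct, Matrix.cons_val,
    star_trivial]
  linear_combination
    (y 0 ^ 2 * w 0 ^ 2 + y 1 ^ 2 * w 1 ^ 2 + y 2 ^ 2 * w 2 ^ 2) * Real.sq_sqrt zero_le_two

theorem HasDerivWithinAt.euclidean_apply {n : ℕ} {f : ℝ → EuclideanSpace ℝ (Fin n)}
    {f' : EuclideanSpace ℝ (Fin n)} {s : Set ℝ} {x : ℝ} (hf : HasDerivWithinAt f f' s x)
    (i : Fin n) : HasDerivWithinAt (fun t => f t i) (f' i) s x :=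
  (EuclideanSpace.proj (𝕜 := ℝ) i).hasFDerivAt.comp_hasDerivWithinAt x hf

theorem HasDerivWithinAt.gmap_comp {v : ℝ → E3} {v' : E3} {s : Set ℝ} {t : ℝ}
    (hv : HasDerivWithinAt v v' s t) :
    HasDerivWithinAt (gmap ∘ v) (gmapDeriv (v t) v') s t := by
  refine (PiLp.hasStrictFDerivAt_toLp (𝕜 := ℝ) 2 _).hasFDerivAt.comp_hasDerivWithinAt
    (f := fun s => WithLp.ofLp (gmap (v s))) t (hasDerivWithinAt_pi.2 fun i => ?_)
  have h := hv.euclidean_apply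
  have diag (k : Fin 3) :
      HasDerivWithinAt (fun x => √2 / 2 * v x k ^ 2) (√2 * v t k * v' k) s t :=
    (((h k).pow 2).const_mul (√2 / 2)).congr_deriv (by ring)
  fin_cases i
  exacts [diag 0, diag 1, diag 2, (h 0).mul (h 1), (h 1).mul (h 2), (h 2).mul (h 0)]

theorem HasDerivWithinAt.inner_eq_zero_of_norm_eqOn_const {F : Type*} [NormedAddCommGroup F]
    [InnerProductSpace ℝ F] {f : ℝ → F} {f' : F} {s : Set ℝ} {x c : ℝ}
    (hf : HasDerivWithinAt f f' s x) (hs : UniqueDiffWithinAt ℝ s x) (hx : x ∈ s)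
    (hc : ∀ y ∈ s, ‖f y‖ = c) : ⟪f x, f'⟫ = 0 := by
  have hconst : HasDerivWithinAt (‖f ·‖ ^ 2) 0 s x :=
    (hasDerivWithinAt_const x s (c ^ 2)).congr (fun y hy => by rw [hc y hy]) (by rw [hc x hx])
  simpa using hs.eq_deriv _ hf.norm_sq hconst

/-- if `v : I → S² ⊂ ℝ³` is a differentiable curve on an interval `I` and
`u = g ∘ v`, then `‖u'(t)‖ = ‖v'(t)‖` for every `t ∈ I`: `g` is an isometric immersion
along curves on the sphere. -/
theorem stmt_6 (a b : ℝ) (hab : a < b) (v v' : ℝ → E3) (u' : ℝ → E6)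
    (hsph : ∀ t ∈ Set.Icc a b, ‖v t‖ = 1)
    (hv : ∀ t ∈ Set.Icc a b, HasDerivWithinAt v (v' t) (Set.Icc a b) t)
    (hu : ∀ t ∈ Set.Icc a b, HasDerivWithinAt (gmap ∘ v) (u' t) (Set.Icc a b) t) :
    ∀ t ∈ Set.Icc a b, ‖u' t‖ = ‖v' t‖ := by
  intro t ht
  have hunique := uniqueDiffOn_Icc hab t ht
  have hvt := hv t ht
  have hu' : u' t = gmapDeriv (v t) (v' t) := hunique.eq_deriv _ (hu t ht) hvt.gmap_comp
  have horth : ⟪v t, v' t⟫ = 0 := hvt.inner_eq_zero_of_norm_eqOn_const hunique ht hsph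
  have hsq : ‖u' t‖ ^ 2 = ‖v' t‖ ^ 2 := by
    rw [hu', norm_gmapDeriv_sq, hsph t ht, horth]
    ring
  exact (sq_eq_sq₀ (norm_nonneg _) (norm_nonneg _)).1 hsq
end

section
/- For the curve c : [−1,1] → ℝ³ with ċ(s) = (1/√2)(1, s², √(1−s⁴)), the total curvature ∫₋₁¹ k(s) ds and the total absolute torsion ∫₋₁¹ |τ(s)| ds are both equal to π/√2, where k(s) = √2|s|/√(1−s⁴) and |τ(s)| = √2|s|/√(1−s⁴). -/
/-!
The substitution `t = s²` is made valid across `s = 0` by using `t = s·|s|` instead: it has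
derivative `2|s|` and square `s⁴`, so `arcsin (s·|s|)` is an antiderivative of `2|s|/√(1 - s⁴)`
on `(-1, 1)`, and the integral over `[-1, 1]` is `(√2/2)·(arcsin 1 - arcsin (-1)) = π/√2`.
-/

open Real

theorem hasDerivAt_mul_abs (x : ℝ) : HasDerivAt (fun y : ℝ => y * |y|) (2 * |x|) x := by
  refine hasDerivAt_of_hasDerivAt_of_ne' (g := fun y => 2 * |y|) (x := 0) (fun y hy => ?_)
    (by fun_prop) (by fun_prop) x
  refine ((hasDerivAt_id' y).mul (hasDerivAt_abs hy)).congr_deriv ?_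
  rcases hy.lt_or_gt with hy | hy
  · simp [sign_neg hy, abs_of_neg hy]; ring
  · simp [sign_pos hy, abs_of_pos hy]; ring

theorem hasDerivAt_arcsin_mul_abs {x : ℝ} (hx : x ∈ Set.Ioo (-1) 1) :
    HasDerivAt (fun s => arcsin (s * |s|)) (2 * |x| / √(1 - x ^ 4)) x := by
  have hsq : (x * |x|) ^ 2 = x ^ 4 := by rw [mul_pow, sq_abs]; ring
  obtain ⟨hlt, hgt⟩ : -1 < x * |x| ∧ x * |x| < 1 := by
    rw [← abs_lt, abs_mul, abs_abs, ← sq]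
    exact (sq_lt_one_iff₀ (abs_nonneg x)).2 (abs_lt.2 hx)
  refine ((hasDerivAt_arcsin hlt.ne' hgt.ne).comp x (hasDerivAt_mul_abs x)).congr_deriv ?_
  rw [hsq, one_div_mul_eq_div]

theorem integral_two_mul_abs_div_sqrt_one_sub_pow_four {a b : ℝ} (hab : a ≤ b) (ha : -1 ≤ a)
    (hb : b ≤ 1) :
    ∫ s in a..b, 2 * |s| / √(1 - s ^ 4) = arcsin (b * |b|) - arcsin (a * |a|) := by
  have hderiv : ∀ x ∈ Set.Ioo a b,
      HasDerivAt (fun s => arcsin (s * |s|)) (2 * |x| / √(1 - x ^ 4)) x := fun x hx =>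
    hasDerivAt_arcsin_mul_abs ⟨ha.trans_lt hx.1, hx.2.trans_le hb⟩
  have hcont : Continuous fun s : ℝ => arcsin (s * |s|) := by fun_prop
  refine intervalIntegral.integral_eq_sub_of_hasDerivAt_of_le hab hcont.continuousOn hderiv ?_
  refine intervalIntegral.intervalIntegrable_deriv_of_nonneg hcont.continuousOn ?_ ?_
  · simpa [hab] using hderiv
  · intro x _
    positivity

theorem integral_sqrt_two_mul_abs_div_sqrt_one_sub_pow_four :
    ∫ s in (-1 : ℝ)..1, √2 * |s| / √(1 - s ^ 4) = π / √2 := by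
  have hfactor : (fun s : ℝ => √2 * |s| / √(1 - s ^ 4)) =
      fun s => √2 / 2 * (2 * |s| / √(1 - s ^ 4)) := by
    funext s; ring
  rw [hfactor, intervalIntegral.integral_const_mul,
    integral_two_mul_abs_div_sqrt_one_sub_pow_four (by norm_num) le_rfl le_rfl]
  field_simp
  norm_num [arcsin_one, arcsin_neg]

/-- for the curve `c` with `ċ(s) = (1/√2)(1, s², √(1−s⁴))`, the total
curvature `∫₋₁¹ k(s) ds` and the total absolute torsion `∫₋₁¹ |τ(s)| ds` both equal `π/√2`,
where `k(s) = √2|s|/√(1−s⁴)` and `|τ(s)| = √2|s|/√(1−s⁴)`. -/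
theorem stmt_14 (k τ : ℝ → ℝ)
    (hk : ∀ s, k s = Real.sqrt 2 * |s| / Real.sqrt (1 - s ^ 4))
    (hτ : ∀ s, |τ s| = Real.sqrt 2 * |s| / Real.sqrt (1 - s ^ 4)) :
    (∫ s in (-1 : ℝ)..1, k s) = π / Real.sqrt 2 ∧
    (∫ s in (-1 : ℝ)..1, |τ s|) = π / Real.sqrt 2 := by
  simp only [hk, hτ]
  exact ⟨integral_sqrt_two_mul_abs_div_sqrt_one_sub_pow_four,
    integral_sqrt_two_mul_abs_div_sqrt_one_sub_pow_four⟩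
end
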